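/- For every real c > 1, ∫_0^1 Li_c(x)/x · ln(ln(1/x)) dx = −γ ζ(c+1) + ζ'(c+1). -/

import Mathlib

/-!
Substituting `x = e^{-t}` turns the integral into `∫₀^∞ Li_c(e^{-t}) log t dt`. Expanding
`Li_c(e^{-t}) = ∑ k^{-c} e^{-kt}` and integrating termwise (each term is dominated by
`k^{-c} |log t| e^{-t}`) leaves `∑ k^{-c} ∫₀^∞ e^{-kt} log t dt = ∑ k^{-c} (-γ - log k) / k`,
because `∫₀^∞ e^{-t} log t dt = Γ'(1) = -γ`. The two series are `-γ ζ(c+1)` and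
`ζ'(c+1) = -∑ log k / k^{c+1}`.
-/

open MeasureTheory Real

/-- The Riemann zeta function as a real function, `ζ(s) = ∑_{n ≥ 1} n^{-s}`. -/
noncomputable def zetaR (s : ℝ) : ℝ := ∑' n : ℕ, ((n : ℝ) + 1) ^ (-s)

/-- The polylogarithm `Li_c(x) = ∑_{k ≥ 1} x^k / k^c` of real order `c`. -/
noncomputable def polylogR (c : ℝ) (x : ℝ) : ℝ :=
  ∑' k : ℕ, x ^ (k + 1) / ((k : ℝ) + 1) ^ c

open Set

lemma abs_log_le_rpow_add_rpow_neg_div {x ε : ℝ} (hx : 0 < x) (hε : 0 < ε) :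
    |log x| ≤ (x ^ ε + x ^ (-ε)) / ε := by
  rcases le_or_gt 1 x with h1 | h1
  · rw [abs_of_nonneg (log_nonneg h1)]
    calc log x ≤ x ^ ε / ε := log_le_rpow_div hx.le hε
      _ ≤ _ := by gcongr; exact le_add_of_nonneg_right (by positivity)
  · rw [abs_of_neg (log_neg hx h1), ← log_inv, rpow_neg hx.le, ← inv_rpow hx.le]
    calc log x⁻¹ ≤ x⁻¹ ^ ε / ε := log_le_rpow_div (by positivity) hε
      _ ≤ _ := by gcongr; exact le_add_of_nonneg_left (by positivity)

lemma integrableOn_log_mul_exp_neg :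
    IntegrableOn (fun t => log t * exp (-t)) (Ioi 0) := by
  -- `|log t| ≤ 2 (t^{1/2} + t^{-1/2})`, so Gamma integrands at `s = 3/2` and `s = 1/2` dominate.
  have hdom := ((GammaIntegral_convergent (s := 3 / 2) (by norm_num)).add
    (GammaIntegral_convergent (s := 1 / 2) (by norm_num))).const_mul 2
  refine hdom.mono' (by fun_prop) ?_
  filter_upwards [ae_restrict_mem measurableSet_Ioi] with t (ht : 0 < t)
  have hlog := abs_log_le_rpow_add_rpow_neg_div ht (by norm_num : (0 : ℝ) < 1 / 2)
  rw [norm_mul, norm_of_nonneg (exp_pos _).le, norm_eq_abs]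
  norm_num at hlog ⊢
  nlinarith [exp_pos (-t)]

lemma integral_log_mul_exp_neg :
    ∫ t in Ioi 0, log t * exp (-t) = -eulerMascheroniConstant := by
  have hGamma : HasDerivAt Complex.Gamma
      (∫ t : ℝ in Ioi 0, (t : ℂ) ^ ((1 : ℂ) - 1) * (log t * exp (-t))) 1 := by
    refine (Complex.hasDerivAt_GammaIntegral (by simp)).congr_of_eventuallyEq ?_
    filter_upwards [(isOpen_lt continuous_const Complex.continuous_re).mem_nhds
      (by simp : (0 : ℝ) < (1 : ℂ).re)] with z hz using Complex.Gamma_eq_integral hz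
  have h := hGamma.unique Complex.hasDerivAt_Gamma_one
  simp only [sub_self, Complex.cpow_zero, one_mul] at h
  apply Complex.ofReal_injective
  rw [← integral_complex_ofReal]
  push_cast at h ⊢
  exact h

lemma norm_log_mul_exp_neg_mul_le {a t : ℝ} (ha : 1 ≤ a) (ht : 0 ≤ t) :
    ‖log t * exp (-(a * t))‖ ≤ ‖log t * exp (-t)‖ := by
  simp only [norm_mul, norm_of_nonneg (exp_pos _).le]
  gcongr
  exact le_mul_of_one_le_left ht ha

lemma integral_log_mul_exp_neg_mul {a : ℝ} (ha : 0 < a) :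
    ∫ t in Ioi 0, log t * exp (-(a * t)) = (-eulerMascheroniConstant - log a) / a := by
  have hsub := integral_comp_mul_left_Ioi (fun u => log u * exp (-u) - log a * exp (-u)) 0 ha
  rw [mul_zero, integral_sub integrableOn_log_mul_exp_neg
    ((integrableOn_exp_neg_Ioi 0).const_mul _), integral_const_mul, integral_log_mul_exp_neg,
    integral_exp_neg_Ioi_zero] at hsub
  calc ∫ t in Ioi 0, log t * exp (-(a * t))
      = ∫ t in Ioi 0, (log (a * t) * exp (-(a * t)) - log a * exp (-(a * t))) :=
        setIntegral_congr_fun measurableSet_Ioi fun t (ht : 0 < t) => by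
          rw [log_mul ha.ne' ht.ne']; ring
    _ = _ := by rw [hsub, smul_eq_mul, mul_one, inv_mul_eq_div]

lemma image_exp_neg_Ioi_zero : (fun t => exp (-t)) '' Ioi 0 = Ioo 0 1 := by
  ext x
  constructor
  · rintro ⟨t, ht, rfl⟩
    exact ⟨exp_pos _, exp_lt_one_iff.mpr (neg_neg_iff_pos.mpr ht)⟩
  · rintro ⟨hx0, hx1⟩
    exact ⟨-log x, neg_pos.mpr (log_neg hx0 hx1), by simp [exp_log hx0]⟩

lemma integral_Ioo_zero_one_eq_integral_exp_neg {E : Type*} [NormedAddCommGroup E]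
    [NormedSpace ℝ E] (g : ℝ → E) :
    ∫ x in Ioo 0 1, g x = ∫ t in Ioi 0, exp (-t) • g (exp (-t)) := by
  rw [← image_exp_neg_Ioi_zero, integral_image_eq_integral_abs_deriv_smul measurableSet_Ioi
    (fun t _ => ((hasDerivAt_neg t).exp).hasDerivWithinAt)
    (fun s _ t _ h => neg_injective (exp_injective h))]
  simp only [mul_neg, mul_one, abs_neg, abs_of_pos (exp_pos _)]

lemma integral_tsum_smul_of_norm_le {α ι E : Type*} [MeasurableSpace α] {μ : Measure α}
    [Countable ι] [NormedAddCommGroup E] [NormedSpace ℝ E] {a : ι → ℝ} {f : ι → α → E}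
    {g : α → ℝ} (ha : Summable a) (hg : Integrable g μ) (hf : ∀ i, AEStronglyMeasurable (f i) μ)
    (hle : ∀ i, ∀ᵐ x ∂μ, ‖f i x‖ ≤ g x) :
    ∫ x, ∑' i, a i • f i x ∂μ = ∑' i, a i • ∫ x, f i x ∂μ := by
  have hint i : Integrable (f i) μ := hg.mono' (hf i) (hle i)
  have hnorm i : ∫ x, ‖a i • f i x‖ ∂μ ≤ |a i| * ∫ x, g x ∂μ := by
    simp_rw [norm_smul, integral_const_mul, norm_eq_abs]
    exact mul_le_mul_of_nonneg_left (integral_mono_ae (hint i).norm hg (hle i)) (abs_nonneg _)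
  rw [← integral_tsum_of_summable_integral_norm (F := fun i x => a i • f i x)
    (fun i => (hint i).smul (a i))
    (.of_nonneg_of_le (fun _ => integral_nonneg fun _ => norm_nonneg _) hnorm
      (ha.abs.mul_right _))]
  simp_rw [integral_smul]

lemma summable_nat_add_one_rpow_neg {s : ℝ} (hs : 1 < s) :
    Summable fun n : ℕ => ((n : ℝ) + 1) ^ (-s) := by
  simpa using (summable_nat_add_iff 1).mpr (Real.summable_nat_rpow.mpr (neg_lt_neg hs))

lemma summable_log_mul_nat_add_one_rpow_neg {s : ℝ} (hs : 1 < s) :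
    Summable fun n : ℕ => log ((n : ℝ) + 1) * ((n : ℝ) + 1) ^ (-s) := by
  obtain ⟨s₀, hs₀, hs₀s⟩ := exists_between hs
  have hε : 0 < s - s₀ := sub_pos.mpr hs₀s
  refine .of_nonneg_of_le (fun n => ?_) (fun n => ?_)
    ((summable_nat_add_one_rpow_neg hs₀).mul_left (s - s₀)⁻¹)
  · exact mul_nonneg (log_nonneg (by simp)) (by positivity)
  · have hn : (0 : ℝ) < n + 1 := by positivity
    calc log ((n : ℝ) + 1) * ((n : ℝ) + 1) ^ (-s)
        ≤ ((n : ℝ) + 1) ^ (s - s₀) / (s - s₀) * ((n : ℝ) + 1) ^ (-s) := by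
          gcongr; exact log_le_rpow_div hn.le hε
      _ = (s - s₀)⁻¹ * ((n : ℝ) + 1) ^ (-s₀) := by
          rw [div_mul_eq_mul_div, ← rpow_add hn]; ring_nf

lemma hasDerivAt_zetaR {s : ℝ} (hs : 1 < s) :
    HasDerivAt zetaR (-∑' n : ℕ, log ((n : ℝ) + 1) * ((n : ℝ) + 1) ^ (-s)) s := by
  obtain ⟨s₀, hs₀, hs₀s⟩ := exists_between hs
  rw [← tsum_neg]
  refine hasDerivAt_tsum_of_isPreconnected (g := fun (n : ℕ) (z : ℝ) => ((n : ℝ) + 1) ^ (-z))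
    (g' := fun n z => -(log ((n : ℝ) + 1) * ((n : ℝ) + 1) ^ (-z)))
    (summable_log_mul_nat_add_one_rpow_neg hs₀) isOpen_Ioi isPreconnected_Ioi
    (fun n y _ => ?_) (fun n y hy => ?_) hs₀s (summable_nat_add_one_rpow_neg hs) hs₀s
  · have hn : (0 : ℝ) < n + 1 := by positivity
    exact ((hasStrictDerivAt_const_rpow hn (-y)).hasDerivAt.comp y (hasDerivAt_neg y)).congr_deriv
      (by ring)
  · have hn : (1 : ℝ) ≤ n + 1 := by simp
    rw [norm_neg, norm_of_nonneg (mul_nonneg (log_nonneg hn) (by positivity))]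
    exact mul_le_mul_of_nonneg_left (rpow_le_rpow_of_exponent_le hn (neg_le_neg (le_of_lt hy)))
      (log_nonneg hn)

lemma polylogR_exp_neg (c t : ℝ) :
    polylogR c (exp (-t)) = ∑' k : ℕ, ((k : ℝ) + 1) ^ (-c) * exp (-(((k : ℝ) + 1) * t)) := by
  refine tsum_congr fun k => ?_
  rw [← exp_nat_mul, rpow_neg (by positivity), inv_mul_eq_div]
  push_cast
  ring_nf

theorem integral_polylog_div_mul_loglog (c : ℝ) (hc : 1 < c) :
    ∫ x in Set.Ioo (0 : ℝ) 1, polylogR c x / x * Real.log (Real.log (1 / x))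
      = -Real.eulerMascheroniConstant * zetaR (c + 1) + deriv zetaR (c + 1) := by
  have hc1 : 1 < c + 1 := by linarith
  calc ∫ x in Ioo 0 1, polylogR c x / x * log (log (1 / x))
      = ∫ t in Ioi 0,
          ∑' k : ℕ, ((k : ℝ) + 1) ^ (-c) • (log t * exp (-(((k : ℝ) + 1) * t))) := by
        rw [integral_Ioo_zero_one_eq_integral_exp_neg]
        refine setIntegral_congr_fun measurableSet_Ioi fun t _ => ?_
        rw [one_div, ← exp_neg, neg_neg, log_exp, polylogR_exp_neg, smul_eq_mul, ← mul_assoc,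
          mul_div_cancel₀ _ (exp_pos _).ne', ← tsum_mul_right]
        exact tsum_congr fun k => by rw [smul_eq_mul]; ring
    _ = ∑' k : ℕ, ((k : ℝ) + 1) ^ (-c) • ∫ t in Ioi 0, log t * exp (-(((k : ℝ) + 1) * t)) :=
        integral_tsum_smul_of_norm_le (summable_nat_add_one_rpow_neg hc)
          integrableOn_log_mul_exp_neg.norm (fun _ => by fun_prop) fun _ =>
            ae_restrict_of_forall_mem measurableSet_Ioi fun _ ht =>
              norm_log_mul_exp_neg_mul_le (by simp) (le_of_lt ht)
    _ = ∑' k : ℕ, (-eulerMascheroniConstant * ((k : ℝ) + 1) ^ (-(c + 1))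
          - log ((k : ℝ) + 1) * ((k : ℝ) + 1) ^ (-(c + 1))) := by
        refine tsum_congr fun k => ?_
        have hk : (0 : ℝ) < k + 1 := by positivity
        rw [smul_eq_mul, integral_log_mul_exp_neg_mul hk, neg_add', rpow_sub hk, rpow_one]
        ring
    _ = _ := by
        rw [Summable.tsum_sub ((summable_nat_add_one_rpow_neg hc1).mul_left _)
          (summable_log_mul_nat_add_one_rpow_neg hc1), tsum_mul_left,
          (hasDerivAt_zetaR hc1).deriv, zetaR]
        ring
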